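/- Let 0 < ε ≤ 1, let c ∈ L^∞((0,1)) with c(x) ≥ c_0 > 0 a.e., and let u ∈ H²((0,1)) ∩ C¹([0,1]) solve −ε u''(x) + c(x) u(x) = 0 on (0,1) with boundary values u(0) = p_0 and u(1) = q_0. Then there exists a constant C, depending only on c_0 and ‖c‖_{L^∞} but independent of ε, p_0 and q_0, such that ε ∫_0^1 |u'(x)|² dx + ∫_0^1 |u(x)|² dx ≤ C (p_0² + q_0²). -/

import Mathlib

/-!
Let `l` be the affine function with the boundary values of `u` and `d = u 1 - u 0` its slope.
The flux `ε (u - l) u'` vanishes at both ends of `[0, 1]`, and by the equation its derivative is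
`ε (u' - d) u' + c u (u - l)`. Young's inequality, `c0 ≤ c ≤ B` and `ε ≤ 1` bound this derivative
below by `(ε u'² + c0 u²) / 2 - (1 + B / 2) (u 0² + u 1²)`, so integrating over `[0, 1]` gives
the estimate with `C = (2 + |B|) / min 1 c0`.
-/

open MeasureTheory Set

lemma sq_add_sub_mul_le {p q t : ℝ} (ht0 : 0 ≤ t) (ht1 : t ≤ 1) :
    (p + (q - p) * t) ^ 2 ≤ p ^ 2 + q ^ 2 := by
  nlinarith [mul_nonneg (mul_nonneg ht0 (sub_nonneg.2 ht1)) (sq_nonneg (p - q)),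
    mul_nonneg ht0 (sq_nonneg p), mul_nonneg (sub_nonneg.2 ht1) (sq_nonneg q)]

lemma energy_density_le_of_mul_eq {ε c c0 B x v a l d : ℝ} (hε0 : 0 ≤ ε) (hε1 : ε ≤ 1)
    (hc0 : 0 ≤ c0) (hc : c0 ≤ c) (hcB : c ≤ B) (heq : ε * a = c * x) :
    ε / 2 * v ^ 2 + c0 / 2 * x ^ 2 - d ^ 2 / 2 - B / 2 * l ^ 2 ≤
      ε * ((v - d) * v + (x - l) * a) := by
  have hv : ε / 2 * v ^ 2 - d ^ 2 / 2 ≤ ε * ((v - d) * v) := by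
    nlinarith [mul_nonneg hε0 (sq_nonneg (v - d)), mul_nonneg (sub_nonneg.2 hε1) (sq_nonneg d)]
  have hx : c0 / 2 * x ^ 2 - B / 2 * l ^ 2 ≤ c * x * (x - l) := by
    nlinarith [mul_nonneg (hc0.trans hc) (sq_nonneg (x - l)),
      mul_nonneg (sub_nonneg.2 hc) (sq_nonneg x), mul_nonneg (sub_nonneg.2 hcB) (sq_nonneg l)]
  have hax : ε * ((x - l) * a) = c * x * (x - l) := by linear_combination (x - l) * heq
  linarith

lemma integral_energy_density_le {c u u' u'' : ℝ → ℝ} {c0 B ε : ℝ} (hc0 : 0 ≤ c0)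
    (hc : ∀ y ∈ Ioo (0 : ℝ) 1, c0 ≤ c y) (hcB : ∀ y ∈ Ioo (0 : ℝ) 1, c y ≤ B)
    (hε0 : 0 ≤ ε) (hε1 : ε ≤ 1)
    (hderiv : ∀ y ∈ Ioo (0 : ℝ) 1, HasDerivAt u (u' y) y ∧ HasDerivAt u' (u'' y) y)
    (hu : ContinuousOn u (Icc 0 1)) (hu' : ContinuousOn u' (Icc 0 1))
    (heq : ∀ y ∈ Ioo (0 : ℝ) 1, ε * u'' y = c y * u y) :
    ∫ y in (0 : ℝ)..1, min 1 c0 / 2 * (ε * u' y ^ 2 + u y ^ 2) ≤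
      (1 + |B| / 2) * (u 0 ^ 2 + u 1 ^ 2) := by
  set K := 1 + |B| / 2
  set P := u 0 ^ 2 + u 1 ^ 2
  set d := u 1 - u 0
  set l : ℝ → ℝ := fun y => u 0 + d * y
  -- the flux, plus a linear term so that `g 1 - g 0 = K * P`
  set g : ℝ → ℝ := fun y => ε * ((u y - l y) * u' y) + K * P * y
  have hg : ∀ y ∈ Ioo (0 : ℝ) 1,
      HasDerivAt g (ε * ((u' y - d) * u' y + (u y - l y) * u'' y) + K * P) y := by
    intro y hy
    obtain ⟨hu_y, hu'_y⟩ := hderiv y hy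
    have hl : HasDerivAt l d y :=
      (((hasDerivAt_id' y).const_mul d).const_add (u 0)).congr_deriv (mul_one d)
    exact ((((hu_y.sub hl).mul hu'_y).const_mul ε).add
      ((hasDerivAt_id' y).const_mul (K * P))).congr_deriv (by simp only [Pi.sub_apply]; ring)
  have hg_cont : ContinuousOn g (Icc 0 1) := by
    unfold g l
    fun_prop
  have hle : ∀ y ∈ Ioo (0 : ℝ) 1, min 1 c0 / 2 * (ε * u' y ^ 2 + u y ^ 2) ≤
      ε * ((u' y - d) * u' y + (u y - l y) * u'' y) + K * P := by
    intro y hy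
    have hdensity := energy_density_le_of_mul_eq (v := u' y) (d := d) (l := l y) hε0 hε1 hc0
      (hc y hy) (hcB y hy) (heq y hy)
    have hl2 : l y ^ 2 ≤ P := sq_add_sub_mul_le hy.1.le hy.2.le
    have hd2 : d ^ 2 ≤ 2 * P := by nlinarith [sq_nonneg (u 0 + u 1)]
    have hBl : B / 2 * l y ^ 2 ≤ |B| / 2 * P := by
      nlinarith [le_abs_self B, abs_nonneg B, sq_nonneg (l y)]
    have hm : min 1 c0 / 2 * (ε * u' y ^ 2 + u y ^ 2) ≤
        ε / 2 * u' y ^ 2 + c0 / 2 * u y ^ 2 := by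
      nlinarith [min_le_left 1 c0, min_le_right 1 c0, mul_nonneg hε0 (sq_nonneg (u' y)),
        sq_nonneg (u y)]
    have hK : K * P = P + |B| / 2 * P := by ring
    linarith
  have hint : IntegrableOn (fun y => min 1 c0 / 2 * (ε * u' y ^ 2 + u y ^ 2)) (Icc 0 1) :=
    (by fun_prop : ContinuousOn _ (Icc (0 : ℝ) 1)).integrableOn_compact isCompact_Icc
  simpa [g, l, d] using intervalIntegral.integral_le_sub_of_hasDeriv_right_of_le zero_le_one
    hg_cont (fun y hy => (hg y hy).hasDerivWithinAt) hint hle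

/-- Uniform energy estimate for the singularly perturbed two-point boundary
value problem: if `0 < ε ≤ 1`, `c ≥ c0 > 0` (with `|c| ≤ B`), and
`u ∈ H²((0,1)) ∩ C¹([0,1])` solves `-ε u'' + c u = 0` on `(0,1)` with
`u 0 = p0` and `u 1 = q0`, then
`ε ∫ |u'|² + ∫ |u|² ≤ C (p0² + q0²)` with `C` depending only on `c0` and the
`L^∞` bound of `c`, but independent of `ε`, `p0` and `q0`. -/
theorem energy_estimate_singular_perturbation_bvp
    (c0 B : ℝ) (hc0 : 0 < c0) :
    ∃ C : ℝ, 0 < C ∧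
      ∀ (c : ℝ → ℝ),
        -- c ∈ L^∞((0,1)) with c ≥ c0 > 0
        (∀ y ∈ Set.Icc (0 : ℝ) 1, c0 ≤ c y) →
        (∀ y ∈ Set.Icc (0 : ℝ) 1, |c y| ≤ B) →
        ∀ (ε p0 q0 : ℝ) (u u' u'' : ℝ → ℝ),
          0 < ε → ε ≤ 1 →
          -- u ∈ H²((0,1)) : two derivatives on (0,1), second one in L²
          (∀ y ∈ Set.Ioo (0 : ℝ) 1,
            HasDerivAt u (u' y) y ∧ HasDerivAt u' (u'' y) y) →
          IntegrableOn (fun y => (u'' y) ^ 2) (Set.Ioo (0 : ℝ) 1) →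
          -- u ∈ C¹([0,1])
          ContinuousOn u (Set.Icc (0 : ℝ) 1) →
          ContinuousOn u' (Set.Icc (0 : ℝ) 1) →
          -- -ε u'' + c u = 0 on (0,1)
          (∀ y ∈ Set.Ioo (0 : ℝ) 1, -(ε * u'' y) + c y * u y = 0) →
          -- boundary values
          u 0 = p0 → u 1 = q0 →
          ε * (∫ y in Set.Ioo (0 : ℝ) 1, (u' y) ^ 2) +
            (∫ y in Set.Ioo (0 : ℝ) 1, (u y) ^ 2) ≤
            C * (p0 ^ 2 + q0 ^ 2) := by
  have hm : 0 < min 1 c0 := lt_min one_pos hc0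
  refine ⟨(2 + |B|) / min 1 c0, by positivity, ?_⟩
  intro c hc hcB ε p0 q0 u u' u'' hε hε1 hderiv _ hu hu' heq hp0 hq0
  have hIoo : Ioo (0 : ℝ) 1 ⊆ Icc 0 1 := Ioo_subset_Icc_self
  have hbound := integral_energy_density_le hc0.le (fun y hy => hc y (hIoo hy))
    (fun y hy => (le_abs_self _).trans (hcB y (hIoo hy))) hε.le hε1 hderiv hu hu'
    (fun y hy => by linarith [heq y hy])
  have hu'2 : IntegrableOn (fun y => u' y ^ 2) (Ioo 0 1) :=
    ((hu'.pow 2).integrableOn_compact isCompact_Icc).mono_set hIoo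
  have hu2 : IntegrableOn (fun y => u y ^ 2) (Ioo 0 1) :=
    ((hu.pow 2).integrableOn_compact isCompact_Icc).mono_set hIoo
  rw [intervalIntegral.integral_of_le zero_le_one, integral_Ioc_eq_integral_Ioo,
    integral_const_mul, integral_add (hu'2.const_mul ε) hu2, integral_const_mul, hp0, hq0]
    at hbound
  rw [div_mul_eq_mul_div, le_div_iff₀ hm]
  linarith
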